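/- arXiv:math/0503438 — 5 statements merged into one kernel-verified Lean document; each statement's English description precedes it below -/
import Mathlib

section
/- If n = a₁b₁ = a₂b₂ with a₁ < a₂ ≤ b₂ < b₁ positive integers all in the interval [x^{1/2} - c₂x^θ, x^{1/2} + c₂x^θ] with 0 ≤ θ < 1/2, then for x sufficiently large (depending on c₂, θ), gcd(a₁, a₂) > 1. -/
/-!
If `gcd(a₁, a₂) = 1`, then `a₁ b₁ = a₂ b₂` forces `a₂ ∣ b₁`, and since `a₂ < b₁` this gives
`b₁ ≥ 2 a₂`. Then `b₁ - a₂ ≥ a₂ ≈ √x`, whereas two numbers in the interval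
`[√x - c₂ x^θ, √x + c₂ x^θ]` differ by at most `2 c₂ x^θ = o(√x)`.
-/

open Filter Real

theorem Nat.two_mul_le_of_dvd_of_lt {a b : ℕ} (hab : a ∣ b) (hlt : a < b) : 2 * a ≤ b := by
  obtain ⟨k, rfl⟩ := hab
  rcases k with _ | _ | k
  · omega
  · omega
  · nlinarith

theorem Nat.two_mul_le_of_mul_eq_mul_of_coprime {a₁ a₂ b₁ b₂ : ℕ} (h : a₁ * b₁ = a₂ * b₂)
    (hcop : a₁.Coprime a₂) (hlt : a₂ < b₁) : 2 * a₂ ≤ b₁ :=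
  have ha₂b₁ : a₂ ∣ b₁ := hcop.symm.dvd_of_dvd_mul_left ⟨b₂, h⟩
  two_mul_le_of_dvd_of_lt ha₂b₁ hlt

theorem eventually_mul_rpow_lt_rpow (c : ℝ) {θ η : ℝ} (h : θ < η) :
    ∀ᶠ x in atTop, c * x ^ θ < x ^ η := by
  filter_upwards [(tendsto_rpow_atTop (sub_pos.2 h)).eventually_gt_atTop c,
    eventually_gt_atTop 0] with x hc hx
  calc c * x ^ θ < x ^ (η - θ) * x ^ θ := mul_lt_mul_of_pos_right hc (rpow_pos_of_pos hx θ)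
    _ = x ^ η := by rw [← rpow_add hx, sub_add_cancel]

theorem stmt0_general (c₂ θ : ℝ) (hθ : θ < 1/2) :
    ∃ x₀ : ℝ, ∀ x : ℝ, x₀ ≤ x →
      ∀ a₁ a₂ b₁ b₂ : ℕ, 0 < a₁ → a₁ < a₂ → a₂ ≤ b₂ → b₂ < b₁ →
        a₁ * b₁ = a₂ * b₂ →
        x ^ ((1:ℝ)/2) - c₂ * x ^ θ ≤ (a₁ : ℝ) → (a₁ : ℝ) ≤ x ^ ((1:ℝ)/2) + c₂ * x ^ θ →
        x ^ ((1:ℝ)/2) - c₂ * x ^ θ ≤ (a₂ : ℝ) → (a₂ : ℝ) ≤ x ^ ((1:ℝ)/2) + c₂ * x ^ θ →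
        x ^ ((1:ℝ)/2) - c₂ * x ^ θ ≤ (b₂ : ℝ) → (b₂ : ℝ) ≤ x ^ ((1:ℝ)/2) + c₂ * x ^ θ →
        x ^ ((1:ℝ)/2) - c₂ * x ^ θ ≤ (b₁ : ℝ) → (b₁ : ℝ) ≤ x ^ ((1:ℝ)/2) + c₂ * x ^ θ →
        1 < Nat.gcd a₁ a₂ := by
  obtain ⟨x₀, hx₀⟩ := eventually_atTop.1 (eventually_mul_rpow_lt_rpow (3 * c₂) hθ)
  refine ⟨x₀, fun x hx a₁ a₂ b₁ b₂ _ ha₁a₂ ha₂b₂ hb₂b₁ hmul _ _ ha₂ _ _ _ _ hb₁ => ?_⟩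
  by_contra hgcd
  have hcop : a₁.Coprime a₂ := by
    have := Nat.gcd_pos_of_pos_right a₁ (by omega : 0 < a₂)
    unfold Nat.Coprime; omega
  have hb₁a₂ : (2 * a₂ : ℝ) ≤ b₁ := by
    exact_mod_cast Nat.two_mul_le_of_mul_eq_mul_of_coprime hmul hcop (by omega)
  linarith [hx₀ x hx]

/-- If `n = a₁b₁ = a₂b₂` with `a₁ < a₂ ≤ b₂ < b₁` positive integers all in
`[x^(1/2) - c₂ x^θ, x^(1/2) + c₂ x^θ]` with `0 ≤ θ < 1/2`, then for `x`
sufficiently large (depending on `c₂, θ`), `gcd(a₁, a₂) > 1`. -/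
theorem stmt0 (c₂ θ : ℝ) (hc₂ : 0 < c₂) (hθ0 : 0 ≤ θ) (hθ : θ < 1/2) :
    ∃ x₀ : ℝ, ∀ x : ℝ, x₀ ≤ x →
      ∀ a₁ a₂ b₁ b₂ : ℕ, 0 < a₁ → a₁ < a₂ → a₂ ≤ b₂ → b₂ < b₁ →
        a₁ * b₁ = a₂ * b₂ →
        x ^ ((1:ℝ)/2) - c₂ * x ^ θ ≤ (a₁ : ℝ) → (a₁ : ℝ) ≤ x ^ ((1:ℝ)/2) + c₂ * x ^ θ →
        x ^ ((1:ℝ)/2) - c₂ * x ^ θ ≤ (a₂ : ℝ) → (a₂ : ℝ) ≤ x ^ ((1:ℝ)/2) + c₂ * x ^ θ →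
        x ^ ((1:ℝ)/2) - c₂ * x ^ θ ≤ (b₂ : ℝ) → (b₂ : ℝ) ≤ x ^ ((1:ℝ)/2) + c₂ * x ^ θ →
        x ^ ((1:ℝ)/2) - c₂ * x ^ θ ≤ (b₁ : ℝ) → (b₁ : ℝ) ≤ x ^ ((1:ℝ)/2) + c₂ * x ^ θ →
        1 < Nat.gcd a₁ a₂ :=
  stmt0_general c₂ θ hθ
end

section
/- Suppose n = a₁b₁ = a₂b₂ with integers a₁ < a₂ ≤ b₂ < b₁ all lying in [x^{1/2} - c₂x^θ, x^{1/2} + c₂x^θ], and write n = (d₁e₁)(d₂e₂) = (d₁e₂)(d₂e₁) with d₁ = gcd(a₁,a₂), d₂ = gcd(b₁,b₂), a₁ = d₁e₁, a₂ = d₁e₂, b₁ = d₂e₂, b₂ = d₂e₁. Then each of d₁, d₂, e₁, e₂ satisfies (1/(2c₂))x^{1/2-θ} - 1/2 ≤ d₁, d₂, e₁, e₂ ≤ 2c₂x^θ. -/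
/-- With `n = (d₁e₁)(d₂e₂) = (d₁e₂)(d₂e₁)`, `1 < d₁ < d₂`, `e₁ < e₂`, and all four
products `a₁ = d₁e₁ < a₂ = d₁e₂ ≤ b₂ = d₂e₁ < b₁ = d₂e₂` in
`[x^(1/2) - c₂ x^θ, x^(1/2) + c₂ x^θ]`, each of `d₁, d₂, e₁, e₂` satisfies
`(1/(2c₂)) x^(1/2-θ) - 1/2 ≤ · ≤ 2 c₂ x^θ`. -/
theorem stmt2 (c₂ θ : ℝ) (hc₂ : 0 < c₂) (hθ0 : 0 ≤ θ) (hθ : θ < 1/2) :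
    ∃ x₀ : ℝ, ∀ x : ℝ, x₀ ≤ x →
      ∀ d₁ d₂ e₁ e₂ : ℕ, 1 < d₁ → d₁ < d₂ → 0 < e₁ → e₁ < e₂ →
        d₁ * e₂ ≤ d₂ * e₁ →
        x ^ ((1:ℝ)/2) - c₂ * x ^ θ ≤ ((d₁ * e₁ : ℕ) : ℝ) →
        ((d₁ * e₁ : ℕ) : ℝ) ≤ x ^ ((1:ℝ)/2) + c₂ * x ^ θ →
        x ^ ((1:ℝ)/2) - c₂ * x ^ θ ≤ ((d₁ * e₂ : ℕ) : ℝ) →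
        ((d₁ * e₂ : ℕ) : ℝ) ≤ x ^ ((1:ℝ)/2) + c₂ * x ^ θ →
        x ^ ((1:ℝ)/2) - c₂ * x ^ θ ≤ ((d₂ * e₁ : ℕ) : ℝ) →
        ((d₂ * e₁ : ℕ) : ℝ) ≤ x ^ ((1:ℝ)/2) + c₂ * x ^ θ →
        x ^ ((1:ℝ)/2) - c₂ * x ^ θ ≤ ((d₂ * e₂ : ℕ) : ℝ) →
        ((d₂ * e₂ : ℕ) : ℝ) ≤ x ^ ((1:ℝ)/2) + c₂ * x ^ θ →
        (1/(2*c₂)) * x ^ ((1:ℝ)/2 - θ) - 1/2 ≤ (d₁ : ℝ) ∧ (d₁ : ℝ) ≤ 2 * c₂ * x ^ θ ∧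
        (1/(2*c₂)) * x ^ ((1:ℝ)/2 - θ) - 1/2 ≤ (d₂ : ℝ) ∧ (d₂ : ℝ) ≤ 2 * c₂ * x ^ θ ∧
        (1/(2*c₂)) * x ^ ((1:ℝ)/2 - θ) - 1/2 ≤ (e₁ : ℝ) ∧ (e₁ : ℝ) ≤ 2 * c₂ * x ^ θ ∧
        (1/(2*c₂)) * x ^ ((1:ℝ)/2 - θ) - 1/2 ≤ (e₂ : ℝ) ∧ (e₂ : ℝ) ≤ 2 * c₂ * x ^ θ := by
  refine ⟨max 1 (c₂ ^ ((1:ℝ)/((1:ℝ)/2 - θ))), ?_⟩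
  intro x hx d₁ d₂ e₁ e₂ hd1 hdd he1 hee hde h1l h1u h2l h2u h3l h3u h4l h4u
  have hx1 : (1:ℝ) ≤ x := le_trans (le_max_left _ _) hx
  have hx0 : (0:ℝ) < x := lt_of_lt_of_le one_pos hx1
  have hθ' : (0:ℝ) < (1:ℝ)/2 - θ := by linarith
  have hcb : c₂ ≤ x ^ ((1:ℝ)/2 - θ) := by
    have h := Real.rpow_le_rpow (Real.rpow_nonneg hc₂.le _)
      (le_trans (le_max_right _ _) hx) hθ'.le
    rwa [← Real.rpow_mul hc₂.le, one_div, inv_mul_cancel₀ hθ'.ne', Real.rpow_one] at h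
  have hxθ : (0:ℝ) < x ^ θ := Real.rpow_pos_of_pos hx0 θ
  have hsub : x ^ ((1:ℝ)/2 - θ) = x ^ ((1:ℝ)/2) / x ^ θ := Real.rpow_sub hx0 _ _
  set A := x ^ ((1:ℝ)/2) with hA
  set B := c₂ * x ^ θ with hB
  have hBpos : (0:ℝ) < B := mul_pos hc₂ hxθ
  have hAB : B ≤ A := by
    rw [hsub] at hcb
    have : c₂ * x ^ θ ≤ (A / x ^ θ) * x ^ θ := by
      apply mul_le_mul_of_nonneg_right hcb hxθ.le
    rwa [div_mul_cancel₀ _ hxθ.ne'] at this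
  push_cast at h1l h1u h2l h2u h3l h3u h4l h4u
  have hd1' : (1:ℝ) < (d₁:ℝ) := by exact_mod_cast hd1
  have hdd' : (d₁:ℝ) + 1 ≤ (d₂:ℝ) := by exact_mod_cast hdd
  have hee' : (e₁:ℝ) + 1 ≤ (e₂:ℝ) := by exact_mod_cast hee
  have he1' : (1:ℝ) ≤ (e₁:ℝ) := by exact_mod_cast he1
  have heu2 : (e₂:ℝ) ≤ 2 * B := by nlinarith [mul_nonneg (by linarith : (0:ℝ) ≤ (d₂:ℝ) - d₁ - 1) (by positivity : (0:ℝ) ≤ (e₂:ℝ))]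
  have heu1 : (e₁:ℝ) ≤ 2 * B := by linarith
  have hdu2 : (d₂:ℝ) ≤ 2 * B := by nlinarith [mul_nonneg (by linarith : (0:ℝ) ≤ (e₂:ℝ) - e₁ - 1) (by positivity : (0:ℝ) ≤ (d₂:ℝ))]
  have hdu1 : (d₁:ℝ) ≤ 2 * B := by linarith
  have hkey : (1/(2*c₂)) * x ^ ((1:ℝ)/2 - θ) - 1/2 = (A - B) / (2*B) := by
    rw [hsub, hB]
    field_simp
  have hld1 : (A - B) / (2*B) ≤ (d₁:ℝ) := by
    rw [div_le_iff₀ (by linarith)]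
    calc A - B ≤ (d₁:ℝ) * e₂ := h2l
      _ ≤ (d₁:ℝ) * (2*B) := by
        apply mul_le_mul_of_nonneg_left heu2 (by positivity)
  have hle1 : (A - B) / (2*B) ≤ (e₁:ℝ) := by
    rw [div_le_iff₀ (by linarith)]
    calc A - B ≤ (d₂:ℝ) * e₁ := h3l
      _ = (e₁:ℝ) * d₂ := by ring
      _ ≤ (e₁:ℝ) * (2*B) := by
        apply mul_le_mul_of_nonneg_left hdu2 (by positivity)
  rw [hkey]
  have h2B : 2 * B = 2 * c₂ * x ^ θ := by rw [hB]; ring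
  rw [h2B] at hdu1 hdu2 heu1 heu2
  exact ⟨hld1, hdu1, by linarith, hdu2, hle1, heu1, by linarith, heu2⟩
end

section
/- For 0 ≤ θ < 1/4 and any constant c₂ > 0, for all sufficiently large x there is no integer n with n = a₁b₁ = a₂b₂ where a₁ < a₂ ≤ b₂ < b₁ are integers in [x^{1/2} - c₂x^θ, x^{1/2} + c₂x^θ]; i.e., all products of pairs of integers from this interval are distinct. -/
open Filter

private lemma aux_ev (C a b : ℝ) (hC : 0 < C) (hab : a < b) :
    ∀ᶠ x in atTop, C * x ^ a < x ^ b := by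
  have h0 : Filter.Tendsto (fun x : ℝ => C * x ^ (a - b)) atTop (nhds 0) := by
    simpa using (tendsto_rpow_neg_atTop (show 0 < b - a by linarith)).const_mul C
  have h1 : ∀ᶠ x in atTop, C * x ^ (a - b) < 1 :=
    h0.eventually_lt_const one_pos
  filter_upwards [h1, eventually_gt_atTop (0 : ℝ)] with x hx hx0
  have hxb : (0:ℝ) < x ^ b := Real.rpow_pos_of_pos hx0 b
  have : C * x ^ (a - b) * x ^ b < 1 * x ^ b := by
    exact mul_lt_mul_of_pos_right hx hxb
  calc C * x ^ a = C * x ^ (a - b) * x ^ b := by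
        rw [mul_assoc, ← Real.rpow_add hx0]; ring_nf
    _ < x ^ b := by linarith

private lemma key_nat (a₁ a₂ b₁ b₂ : ℤ) (h0 : 0 < a₁) (h1 : a₁ < a₂) (h2 : a₂ ≤ b₂)
    (h3 : b₂ < b₁) (he : a₁ * b₁ = a₂ * b₂) : a₁ ≤ (a₂ - a₁) * (b₂ - a₁) := by
  have hd : 1 ≤ a₂ - a₁ := by linarith
  have he' : a₁ * (b₁ - b₂) = (a₂ - a₁) * b₂ := by ring_nf; nlinarith [he]
  have hgt : a₂ - a₁ < b₁ - b₂ := by nlinarith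
  nlinarith [mul_le_mul_of_nonneg_left (by linarith : a₂ - a₁ + 1 ≤ b₁ - b₂) (le_of_lt h0)]

/-- For `0 ≤ θ < 1/4` and any constant `c₂ > 0`, for all sufficiently large `x`
there is no integer `n = a₁b₁ = a₂b₂` with `a₁ < a₂ ≤ b₂ < b₁` integers in
`[x^(1/2) - c₂ x^θ, x^(1/2) + c₂ x^θ]`. -/
theorem stmt3 (c₂ θ : ℝ) (hc₂ : 0 < c₂) (hθ0 : 0 ≤ θ) (hθ : θ < 1/4) :
    ∃ x₀ : ℝ, ∀ x : ℝ, x₀ ≤ x →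
      ¬ ∃ a₁ a₂ b₁ b₂ : ℕ, 0 < a₁ ∧ a₁ < a₂ ∧ a₂ ≤ b₂ ∧ b₂ < b₁ ∧
        a₁ * b₁ = a₂ * b₂ ∧
        x ^ ((1:ℝ)/2) - c₂ * x ^ θ ≤ (a₁ : ℝ) ∧ (a₁ : ℝ) ≤ x ^ ((1:ℝ)/2) + c₂ * x ^ θ ∧
        x ^ ((1:ℝ)/2) - c₂ * x ^ θ ≤ (a₂ : ℝ) ∧ (a₂ : ℝ) ≤ x ^ ((1:ℝ)/2) + c₂ * x ^ θ ∧
        x ^ ((1:ℝ)/2) - c₂ * x ^ θ ≤ (b₂ : ℝ) ∧ (b₂ : ℝ) ≤ x ^ ((1:ℝ)/2) + c₂ * x ^ θ ∧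
        x ^ ((1:ℝ)/2) - c₂ * x ^ θ ≤ (b₁ : ℝ) ∧ (b₁ : ℝ) ≤ x ^ ((1:ℝ)/2) + c₂ * x ^ θ := by
  have h1 := aux_ev (2 * c₂) θ (1/2) (by linarith) (by linarith)
  have h2 := aux_ev (8 * c₂ ^ 2) (2 * θ) (1/2) (by positivity) (by linarith)
  obtain ⟨x₀, hx₀⟩ := eventually_atTop.mp (h1.and (h2.and (eventually_gt_atTop (0:ℝ))))
  refine ⟨x₀, fun x hx hcon => ?_⟩
  obtain ⟨hA, hB, hxpos⟩ := hx₀ x hx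
  obtain ⟨a₁, a₂, b₁, b₂, h0, ha12, hab, hb21, heq, l1, u1, l2, u2, l3, u3, l4, u4⟩ := hcon
  have hkey : (a₁ : ℤ) ≤ ((a₂ : ℤ) - a₁) * ((b₂ : ℤ) - a₁) := by
    exact key_nat (a₁:ℤ) (a₂:ℤ) (b₁:ℤ) (b₂:ℤ) (by exact_mod_cast h0) (by exact_mod_cast ha12)
      (by exact_mod_cast hab) (by exact_mod_cast hb21) (by exact_mod_cast heq)
  have hkeyR : (a₁ : ℝ) ≤ ((a₂ : ℝ) - a₁) * ((b₂ : ℝ) - a₁) := by exact_mod_cast hkey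
  have hd : ((a₂ : ℝ) - a₁) ≤ 2 * (c₂ * x ^ θ) := by linarith
  have he : ((b₂ : ℝ) - a₁) ≤ 2 * (c₂ * x ^ θ) := by linarith
  have hd0 : (0:ℝ) ≤ (a₂ : ℝ) - a₁ := by
    have : (a₁:ℝ) ≤ a₂ := by exact_mod_cast ha12.le
    linarith
  have he0 : (0:ℝ) ≤ (b₂ : ℝ) - a₁ := by
    have : (a₁:ℝ) ≤ b₂ := by exact_mod_cast (ha12.le.trans hab)
    linarith
  have hmul : ((a₂ : ℝ) - a₁) * ((b₂ : ℝ) - a₁) ≤ (2 * (c₂ * x ^ θ)) * (2 * (c₂ * x ^ θ)) := by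
    apply mul_le_mul hd he (by linarith) (by positivity)
  have h2θ : x ^ (2 * θ) = x ^ θ * x ^ θ := by
    rw [two_mul, Real.rpow_add hxpos]
  nlinarith [hmul, hkeyR, l1, hA, hB]
end

section
/- For 1/4 ≤ θ < 1/2, g(θ) ≥ 1 - 2θ: for any ε > 0 and any constants c, c' > 0, there exist arbitrarily large y such that the interval [y - c·y^{1-2θ-ε}, y + c·y^{1-2θ-ε}] contains no integer n with n = a₁b₁ = a₂b₂ where a₁ < a₂ ≤ b₂ < b₁ are integers in [y^{1/2} - c'y^θ, y^{1/2} + c'y^θ]. -/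
/-!
Suppose every large `y` had such an `n`. For large `Y`, the intervals of radius
`r = 2c Y^(1-2θ-ε)` around these `n` cover `[Y, 2Y]`, so there are at least `Y / 2r ≍ Y^(2θ+ε)`
of them. On the other hand `a₁ = st`, `a₂ = s(t+k)`, `b₂ = t(s+d)`, `b₁ = (t+k)(s+d)`, and all four
factors lie within `E = 2c'Y^θ` of a point of `[√Y, 2√Y]`. Hence `td ≤ 2E`, `sk ≤ 2E`, `st ≍ √Y`,
so for each `t` there are `O(√Y/t · E/t · Et/√Y)` choices of `(s, d, k)`; summing over `t ≤ 2E`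
leaves only `O(E² log E) = O(Y^(2θ) log Y)` such `n`, too few because `ε > 0`.
-/

open Real Finset Filter Asymptotics MeasureTheory

lemma exists_factors_of_mul_eq_mul {a₁ a₂ b₁ b₂ : ℕ} (ha₁ : 0 < a₁) (h : a₁ * b₁ = a₂ * b₂) :
    ∃ s t u v, a₁ = s * t ∧ a₂ = s * u ∧ b₁ = u * v ∧ b₂ = t * v := by
  obtain ⟨s, t, ⟨u, rfl⟩, ⟨v, rfl⟩, rfl⟩ := exists_dvd_and_dvd_of_dvd_mul ⟨b₁, h.symm⟩
  refine ⟨s, t, u, v, rfl, rfl, ?_, rfl⟩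
  refine Nat.eq_of_mul_eq_mul_left ha₁ ?_
  rw [h]; ring

/-- Every solution of `a₁ b₁ = a₂ b₂` with `0 < a₁ < a₂ ≤ b₂` is `a₁ = s t`, `a₂ = s (t + k)`,
`b₂ = t (s + d)`, `b₁ = (t + k) (s + d)` with `s, t, k, d ≥ 1`. If `A ≤ a₁ ≤ B` and `b₂ ≤ a₁ + D`
then `t d ≤ D`, `s t ≤ B` and `A k ≤ s t k ≤ D t`, which are the ranges used here. -/
def doubleProducts (A B D : ℕ) : Finset ℕ :=
  (Icc 1 D).biUnion fun t =>
    (Icc 1 (B / t) ×ˢ Icc 1 (D / t) ×ˢ Icc 1 (D * t / A)).image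
      fun x => x.1 * t * (t + x.2.2) * (x.1 + x.2.1)

lemma mul_mem_doubleProducts {A B D a₁ a₂ b₁ b₂ : ℕ} (ha₁ : 0 < a₁) (h₁₂ : a₁ < a₂)
    (h₂₂ : a₂ ≤ b₂) (h : a₁ * b₁ = a₂ * b₂) (hA : 0 < A) (hAa : A ≤ a₁) (haB : a₁ ≤ B)
    (hbD : b₂ ≤ a₁ + D) : a₁ * b₁ ∈ doubleProducts A B D := by
  obtain ⟨s, t, u, v, rfl, rfl, rfl, rfl⟩ := exists_factors_of_mul_eq_mul ha₁ h
  have hs : 0 < s := Nat.pos_of_mul_pos_right ha₁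
  have ht : 0 < t := Nat.pos_of_mul_pos_left ha₁
  obtain ⟨k, rfl⟩ := Nat.exists_eq_add_of_lt (Nat.lt_of_mul_lt_mul_left h₁₂)
  obtain ⟨d, rfl⟩ := Nat.exists_eq_add_of_lt
    (Nat.lt_of_mul_lt_mul_left (by rw [Nat.mul_comm t s]; omega : t * s < t * v))
  have htd : t * (d + 1) ≤ D := by nlinarith
  have hsk : s * (k + 1) ≤ D := by nlinarith
  simp only [doubleProducts, mem_biUnion, mem_image, mem_product, mem_Icc, Prod.exists]
  refine ⟨t, ⟨ht, by nlinarith⟩, s, d + 1, k + 1, ⟨⟨hs, ?_⟩, ⟨by omega, ?_⟩, by omega, ?_⟩, by ring⟩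
  · exact (Nat.le_div_iff_mul_le ht).2 haB
  · exact (Nat.le_div_iff_mul_le ht).2 (by linarith)
  · exact (Nat.le_div_iff_mul_le hA).2 (by nlinarith)

lemma card_doubleProducts_le (A B D : ℕ) :
    ((doubleProducts A B D).card : ℝ) ≤ B / A * D ^ 2 * (1 + log D) := by
  have hterm : ∀ t ∈ Icc 1 D,
      (((B / t) * (D / t) * (D * t / A) : ℕ) : ℝ) ≤ B / A * D ^ 2 * (t : ℝ)⁻¹ := by
    intro t ht
    have ht0 : (t : ℝ) ≠ 0 := by have := (mem_Icc.1 ht).1; positivity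
    have hk : ((D * t / A : ℕ) : ℝ) ≤ D * t / A := by exact_mod_cast Nat.cast_div_le (α := ℝ)
    calc (((B / t) * (D / t) * (D * t / A) : ℕ) : ℝ)
        = ((B / t : ℕ) : ℝ) * ((D / t : ℕ) : ℝ) * ((D * t / A : ℕ) : ℝ) := by
          rw [Nat.cast_mul, Nat.cast_mul]
      _ ≤ (B / t) * (D / t) * (D * t / A) := by gcongr <;> exact Nat.cast_div_le
      _ = B / A * D ^ 2 * (t : ℝ)⁻¹ := by field_simp
  calc ((doubleProducts A B D).card : ℝ)
      ≤ ((∑ t ∈ Icc 1 D, (B / t) * (D / t) * (D * t / A) : ℕ) : ℝ) := by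
        refine Nat.cast_le.2 (card_biUnion_le.trans (sum_le_sum fun t _ => ?_))
        refine card_image_le.trans ?_
        simp [card_product, mul_assoc]
    _ ≤ ∑ t ∈ Icc 1 D, B / A * D ^ 2 * (t : ℝ)⁻¹ := by
        rw [Nat.cast_sum]
        exact sum_le_sum hterm
    _ = B / A * D ^ 2 * harmonic D := by
        rw [← mul_sum, harmonic_eq_sum_Icc]; push_cast; rfl
    _ ≤ B / A * D ^ 2 * (1 + log D) := by
        gcongr; exact harmonic_le_one_add_log D

lemma sub_le_card_mul_of_Icc_subset_biUnion {S : Finset ℝ} {a b r : ℝ} (hr : 0 ≤ r)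
    (h : Set.Icc a b ⊆ ⋃ x ∈ S, Set.Icc (x - r) (x + r)) : b - a ≤ S.card * (2 * r) := by
  refine (ENNReal.ofReal_le_ofReal_iff (by positivity)).1 ?_
  calc ENNReal.ofReal (b - a) = volume (Set.Icc a b) := Real.volume_Icc.symm
    _ ≤ volume (⋃ x ∈ S, Set.Icc (x - r) (x + r)) := measure_mono h
    _ ≤ ∑ x ∈ S, volume (Set.Icc (x - r) (x + r)) := measure_biUnion_finset_le _ _
    _ = ENNReal.ofReal (S.card * (2 * r)) := by
      rw [ENNReal.ofReal_mul (Nat.cast_nonneg _), ENNReal.ofReal_natCast, ← nsmul_eq_mul,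
        ← sum_const]
      congr! 1 with x
      rw [Real.volume_Icc]
      ring_nf

lemma rpow_le_two_mul_rpow {Y y a : ℝ} (hY : 0 < Y) (hYy : Y ≤ y) (hy : y ≤ 2 * Y) (ha : a ≤ 1) :
    y ^ a ≤ 2 * Y ^ a := by
  rcases le_total a 0 with ha0 | ha0
  · linarith [rpow_le_rpow_of_nonpos hY hYy ha0, rpow_pos_of_pos hY a]
  · calc y ^ a ≤ (2 * Y) ^ a := rpow_le_rpow (by linarith) hy ha0
      _ = 2 ^ a * Y ^ a := mul_rpow zero_le_two hY.le
      _ ≤ 2 ^ (1 : ℝ) * Y ^ a := by gcongr; exact one_le_two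
      _ = 2 * Y ^ a := by rw [rpow_one]

noncomputable def doubleProductsNearSqrt (Y E : ℝ) : Finset ℕ :=
  doubleProducts ⌈Y ^ ((1 : ℝ) / 2) - E⌉₊ ⌊2 * Y ^ ((1 : ℝ) / 2) + E⌋₊ ⌊2 * E⌋₊

lemma card_doubleProductsNearSqrt_le {Y E : ℝ} (hY : 1 ≤ Y) (hE0 : 0 ≤ E)
    (hE : 4 * E ≤ Y ^ ((1 : ℝ) / 2)) :
    ((doubleProductsNearSqrt Y E).card : ℝ) ≤ 12 * E ^ 2 * (1 + log Y) := by
  set R := Y ^ ((1 : ℝ) / 2)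
  have hR0 : 0 < R := rpow_pos_of_pos (by linarith) _
  have hRY : R ≤ Y := by
    have := rpow_le_rpow_of_exponent_le hY (show (1 : ℝ) / 2 ≤ 1 by norm_num)
    rwa [rpow_one] at this
  have hA : R - E ≤ ⌈R - E⌉₊ := Nat.le_ceil _
  have hB : (⌊2 * R + E⌋₊ : ℝ) ≤ 2 * R + E := Nat.floor_le (by linarith)
  have hD : (⌊2 * E⌋₊ : ℝ) ≤ 2 * E := Nat.floor_le (by positivity)
  have hBA : (⌊2 * R + E⌋₊ : ℝ) / ⌈R - E⌉₊ ≤ 3 := by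
    rw [div_le_iff₀ (by linarith)]; linarith
  have hlogD : log ⌊2 * E⌋₊ ≤ log Y := by
    rcases Nat.eq_zero_or_pos ⌊2 * E⌋₊ with h0 | hpos
    · rw [h0, Nat.cast_zero, log_zero]; exact log_nonneg hY
    · exact log_le_log (by exact_mod_cast hpos) (by linarith)
  have hlogD0 : 0 ≤ 1 + log ⌊2 * E⌋₊ := by linarith [log_natCast_nonneg ⌊2 * E⌋₊]
  calc _ ≤ _ := card_doubleProducts_le _ _ _
    _ ≤ 3 * (2 * E) ^ 2 * (1 + log Y) := by gcongr
    _ = 12 * E ^ 2 * (1 + log Y) := by ring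

def HasDoubleFactorizationNear (θ ε c c' y : ℝ) : Prop :=
  ∃ n a₁ a₂ b₁ b₂ : ℕ, 0 < a₁ ∧ a₁ < a₂ ∧ a₂ ≤ b₂ ∧ b₂ < b₁ ∧
    n = a₁ * b₁ ∧ n = a₂ * b₂ ∧
    y - c * y ^ (1 - 2*θ - ε) ≤ (n : ℝ) ∧ (n : ℝ) ≤ y + c * y ^ (1 - 2*θ - ε) ∧
    y ^ ((1:ℝ)/2) - c' * y ^ θ ≤ (a₁ : ℝ) ∧ (a₁ : ℝ) ≤ y ^ ((1:ℝ)/2) + c' * y ^ θ ∧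
    y ^ ((1:ℝ)/2) - c' * y ^ θ ≤ (a₂ : ℝ) ∧ (a₂ : ℝ) ≤ y ^ ((1:ℝ)/2) + c' * y ^ θ ∧
    y ^ ((1:ℝ)/2) - c' * y ^ θ ≤ (b₂ : ℝ) ∧ (b₂ : ℝ) ≤ y ^ ((1:ℝ)/2) + c' * y ^ θ ∧
    y ^ ((1:ℝ)/2) - c' * y ^ θ ≤ (b₁ : ℝ) ∧ (b₁ : ℝ) ≤ y ^ ((1:ℝ)/2) + c' * y ^ θ

lemma Icc_subset_biUnion_doubleProductsNearSqrt {θ ε c c' Y : ℝ} (hθ : θ ≤ 1) (hθε : 0 ≤ 2 * θ + ε)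
    (hc : 0 ≤ c) (hc' : 0 ≤ c') (hY : 0 < Y) (hE : 2 * c' * Y ^ θ < Y ^ ((1 : ℝ) / 2))
    (h : ∀ y ∈ Set.Icc Y (2 * Y), HasDoubleFactorizationNear θ ε c c' y) :
    Set.Icc Y (2 * Y) ⊆ ⋃ x ∈ (doubleProductsNearSqrt Y (2 * c' * Y ^ θ)).image Nat.cast,
      Set.Icc (x - 2 * c * Y ^ (1 - 2 * θ - ε)) (x + 2 * c * Y ^ (1 - 2 * θ - ε)) := by
  intro y hy
  obtain ⟨n, a₁, a₂, b₁, b₂, ha₁, h₁₂, h₂₂, -, rfl, hn, hny, hyn, ha₁y, ha₁y', -, -, -, hb₂y, -,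
    -⟩ := h y hy
  have hRy : Y ^ ((1 : ℝ) / 2) ≤ y ^ ((1 : ℝ) / 2) := rpow_le_rpow hY.le hy.1 (by norm_num)
  have hRy2 := rpow_le_two_mul_rpow hY hy.1 hy.2 (show (1 : ℝ) / 2 ≤ 1 by norm_num)
  have hθy := mul_le_mul_of_nonneg_left (rpow_le_two_mul_rpow hY hy.1 hy.2 hθ) hc'
  have hey := mul_le_mul_of_nonneg_left
    (rpow_le_two_mul_rpow hY hy.1 hy.2 (show 1 - 2 * θ - ε ≤ 1 by linarith)) hc
  have hD : b₂ - a₁ ≤ ⌊2 * (2 * c' * Y ^ θ)⌋₊ :=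
    Nat.le_floor (by rw [Nat.cast_sub (by omega)]; linarith)
  have hmem : a₁ * b₁ ∈ doubleProductsNearSqrt Y (2 * c' * Y ^ θ) :=
    mul_mem_doubleProducts ha₁ h₁₂ h₂₂ hn (Nat.ceil_pos.2 (by linarith))
      (Nat.ceil_le.2 (by linarith)) (Nat.le_floor (by linarith)) (by omega)
  simp only [Set.mem_iUnion, Set.mem_Icc, mem_image, exists_prop, exists_exists_and_eq_and]
  exact ⟨_, hmem, by linarith, by linarith⟩

lemma rpow_le_of_forall_hasDoubleFactorizationNear {θ ε c c' Y : ℝ} (hθ : θ ≤ 1)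
    (hθε : 0 ≤ 2 * θ + ε) (hc : 0 ≤ c) (hc' : 0 ≤ c') (hY : 1 ≤ Y)
    (hE : 8 * c' * Y ^ θ ≤ Y ^ ((1 : ℝ) / 2))
    (h : ∀ y ∈ Set.Icc Y (2 * Y), HasDoubleFactorizationNear θ ε c c' y) :
    Y ^ ε ≤ 192 * c * c' ^ 2 * (1 + log Y) := by
  have hY0 : 0 < Y := by linarith
  have hR0 : 0 < Y ^ ((1 : ℝ) / 2) := rpow_pos_of_pos hY0 _
  have hE0 : 0 ≤ 2 * c' * Y ^ θ := by positivity
  have hcover := Icc_subset_biUnion_doubleProductsNearSqrt hθ hθε hc hc' hY0 (by linarith) h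
  have hcard := sub_le_card_mul_of_Icc_subset_biUnion (by positivity) hcover
  have hN := card_doubleProductsNearSqrt_le hY hE0 (by linarith)
  have hsplit : Y ^ ε * ((Y ^ θ) ^ 2 * Y ^ (1 - 2 * θ - ε)) = Y := by
    rw [← rpow_natCast, ← rpow_mul hY0.le, ← rpow_add hY0, ← rpow_add hY0]
    convert rpow_one Y using 2
    push_cast
    ring
  refine le_of_mul_le_mul_right ?_ (by positivity : 0 < (Y ^ θ) ^ 2 * Y ^ (1 - 2 * θ - ε))
  calc Y ^ ε * ((Y ^ θ) ^ 2 * Y ^ (1 - 2 * θ - ε)) = 2 * Y - Y := by rw [hsplit]; ring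
    _ ≤ _ := hcard
    _ ≤ 12 * (2 * c' * Y ^ θ) ^ 2 * (1 + log Y) * (2 * (2 * c * Y ^ (1 - 2 * θ - ε))) := by
        gcongr
        exact (Nat.cast_le.2 card_image_le).trans hN
    _ = _ := by ring

lemma eventually_const_mul_rpow_le_rpow (K : ℝ) {a b : ℝ} (hab : a < b) :
    ∀ᶠ x in atTop, K * x ^ a ≤ x ^ b := by
  filter_upwards [(tendsto_rpow_atTop (sub_pos.2 hab)).eventually_ge_atTop K,
    eventually_gt_atTop 0] with x hK hx
  calc K * x ^ a ≤ x ^ (b - a) * x ^ a := by gcongr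
    _ = x ^ b := by rw [← rpow_add hx, sub_add_cancel]

lemma eventually_const_mul_one_add_log_lt_rpow (K : ℝ) {ε : ℝ} (hε : 0 < ε) :
    ∀ᶠ x in atTop, K * (1 + log x) < x ^ ε := by
  have hone : (fun _ => (1 : ℝ)) =o[atTop] fun x => x ^ ε :=
    (isLittleO_one_left_iff ℝ).2 <| (tendsto_rpow_atTop hε).congr' <| by
      filter_upwards [eventually_ge_atTop 0] with x hx
      rw [norm_of_nonneg (rpow_nonneg hx ε)]
  have hlog := ((hone.add (isLittleO_log_rpow_atTop hε)).const_mul_left K).def one_half_pos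
  filter_upwards [hlog, eventually_gt_atTop 0] with x hx hx0
  have hpos := rpow_pos_of_pos hx0 ε
  rw [norm_of_nonneg hpos.le] at hx
  linarith [le_abs_self (K * (1 + log x)), Real.norm_eq_abs (K * (1 + log x))]

/-- For `1/4 ≤ θ < 1/2`: for any `ε > 0` and constants `c, c' > 0` there exist
arbitrarily large `y` such that `[y - c y^(1-2θ-ε), y + c y^(1-2θ-ε)]` contains no
integer `n = a₁b₁ = a₂b₂` with `a₁ < a₂ ≤ b₂ < b₁` integers in
`[y^(1/2) - c' y^θ, y^(1/2) + c' y^θ]`. -/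
theorem stmt5 (θ ε c c' : ℝ) (hθ1 : 1/4 ≤ θ) (hθ2 : θ < 1/2) (hε : 0 < ε)
    (hc : 0 < c) (hc' : 0 < c') :
    ∀ y₀ : ℝ, ∃ y : ℝ, y₀ ≤ y ∧
      ¬ ∃ n a₁ a₂ b₁ b₂ : ℕ, 0 < a₁ ∧ a₁ < a₂ ∧ a₂ ≤ b₂ ∧ b₂ < b₁ ∧
        n = a₁ * b₁ ∧ n = a₂ * b₂ ∧
        y - c * y ^ (1 - 2*θ - ε) ≤ (n : ℝ) ∧ (n : ℝ) ≤ y + c * y ^ (1 - 2*θ - ε) ∧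
        y ^ ((1:ℝ)/2) - c' * y ^ θ ≤ (a₁ : ℝ) ∧ (a₁ : ℝ) ≤ y ^ ((1:ℝ)/2) + c' * y ^ θ ∧
        y ^ ((1:ℝ)/2) - c' * y ^ θ ≤ (a₂ : ℝ) ∧ (a₂ : ℝ) ≤ y ^ ((1:ℝ)/2) + c' * y ^ θ ∧
        y ^ ((1:ℝ)/2) - c' * y ^ θ ≤ (b₂ : ℝ) ∧ (b₂ : ℝ) ≤ y ^ ((1:ℝ)/2) + c' * y ^ θ ∧
        y ^ ((1:ℝ)/2) - c' * y ^ θ ≤ (b₁ : ℝ) ∧ (b₁ : ℝ) ≤ y ^ ((1:ℝ)/2) + c' * y ^ θ := by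
  intro y₀
  by_contra! hnear
  obtain ⟨Y, hY₀, hY, hE, hlog⟩ := ((eventually_ge_atTop y₀).and <| (eventually_ge_atTop 1).and <|
    (eventually_const_mul_rpow_le_rpow (8 * c') hθ2).and <|
    eventually_const_mul_one_add_log_lt_rpow (192 * c * c' ^ 2) hε).exists
  exact hlog.not_ge <| rpow_le_of_forall_hasDoubleFactorizationNear (by linarith) (by linarith)
    hc.le hc'.le hY hE fun y hy => hnear y (hY₀.trans hy.1)
end

section
/- For 1/4 ≤ θ ≤ 1/3, g(θ) ≤ 1 - θ: there exist constants C, C' > 0 such that for every sufficiently large x, the interval [x - C'x^{1-θ}, x + C'x^{1-θ}] contains an integer n = a₁b₁ = a₂b₂ with integers a₁ < a₂ ≤ b₂ < b₁ all in [x^{1/2} - Cx^θ, x^{1/2} + Cx^θ]. -/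
set_option maxHeartbeats 1000000


/-- Theorem 3: for `1/4 ≤ θ ≤ 1/3` there are constants `C, C' > 0` such that every
interval `[x - C' x^(1-θ), x + C' x^(1-θ)]` with `x` large contains an integer
`n = a₁b₁ = a₂b₂` with integers `a₁ < a₂ ≤ b₂ < b₁` all in
`[x^(1/2) - C x^θ, x^(1/2) + C x^θ]`. -/
theorem stmt9 (θ : ℝ) (hθ1 : 1/4 ≤ θ) (hθ2 : θ ≤ 1/3) :
    ∃ C C' : ℝ, 0 < C ∧ 0 < C' ∧ ∃ x₀ : ℝ, ∀ x : ℝ, x₀ ≤ x →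
      ∃ n a₁ a₂ b₁ b₂ : ℕ, 0 < a₁ ∧ a₁ < a₂ ∧ a₂ ≤ b₂ ∧ b₂ < b₁ ∧
        n = a₁ * b₁ ∧ n = a₂ * b₂ ∧
        x - C' * x ^ (1 - θ) ≤ (n : ℝ) ∧ (n : ℝ) ≤ x + C' * x ^ (1 - θ) ∧
        (∀ m ∈ [a₁, a₂, b₂, b₁],
          x ^ ((1:ℝ)/2) - C * x ^ θ ≤ (m : ℝ) ∧ (m : ℝ) ≤ x ^ ((1:ℝ)/2) + C * x ^ θ) := by
  refine ⟨10, 40, by norm_num, by norm_num, 10^12, fun x hx => ?_⟩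
  have hx0 : (0:ℝ) < x := lt_of_lt_of_le (by norm_num) hx
  have hx1 : (1:ℝ) ≤ x := le_trans (by norm_num) hx
  set y := x ^ ((1:ℝ)/2) with hy_def
  set T := x ^ θ with hT_def
  set X := x ^ (1 - θ) with hX_def
  set U := x ^ ((1:ℝ)/2 - θ) with hU_def
  have hbig : ∀ e : ℝ, 1/6 ≤ e → (100:ℝ) ≤ x ^ e := by
    intro e he
    have h1 : ((10:ℝ)^12) ^ ((1:ℝ)/6) = 100 := by
      rw [show ((10:ℝ)^12) = (100:ℝ)^(6:ℕ) by norm_num, ← Real.rpow_natCast (100:ℝ) 6,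
        ← Real.rpow_mul (by norm_num)]
      norm_num
    calc (100:ℝ) = ((10:ℝ)^12) ^ ((1:ℝ)/6) := h1.symm
      _ ≤ x ^ ((1:ℝ)/6) := Real.rpow_le_rpow (by norm_num) hx (by norm_num)
      _ ≤ x ^ e := Real.rpow_le_rpow_of_exponent_le hx1 he
  clear hx
  have hT100 : (100:ℝ) ≤ T := hbig θ (by linarith)
  have hU100 : (100:ℝ) ≤ U := hbig _ (by linarith)
  have hT0 : (0:ℝ) < T := by linarith
  have hU0 : (0:ℝ) < U := by linarith
  have hy0 : (0:ℝ) < y := Real.rpow_pos_of_pos hx0 _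
  have hX0 : (0:ℝ) < X := Real.rpow_pos_of_pos hx0 _
  have hyy : y * y = x := by
    rw [hy_def, ← Real.rpow_add hx0]; norm_num
  have hyU : y * U = X := by
    rw [hy_def, hU_def, hX_def, ← Real.rpow_add hx0]; congr 1; ring
  have hTU : T * U = y := by
    rw [hy_def, hU_def, hT_def, ← Real.rpow_add hx0]; congr 1; ring
  have hUT : U ≤ T := Real.rpow_le_rpow_of_exponent_le hx1 (by linarith)
  have hTX : T * T ≤ X := by
    rw [hT_def, hX_def, ← Real.rpow_add hx0]
    exact Real.rpow_le_rpow_of_exponent_le hx1 (by linarith)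
  have hyX : y ≤ X := Real.rpow_le_rpow_of_exponent_le hx1 (by linarith)
  -- natural number setup
  obtain ⟨p, hp_def⟩ : ∃ v : ℕ, v = ⌊U/2⌋₊ := ⟨_, rfl⟩
  have hp1 : (p:ℝ) ≤ U/2 := by rw [hp_def]; exact Nat.floor_le (by positivity)
  have hp2 : U/2 < (p:ℝ) + 1 := by rw [hp_def]; exact Nat.lt_floor_add_one _
  have hp0 : 1 ≤ p := by rw [hp_def]; exact Nat.le_floor (by push_cast; linarith)
  obtain ⟨u, hu_def⟩ : ∃ v : ℕ, v = 2*p+1 := ⟨_, rfl⟩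
  have hu_cast : (u:ℝ) = 2*(p:ℝ)+1 := by rw [hu_def]; push_cast; ring
  have hu1 : (u:ℝ) ≤ U + 1 := by rw [hu_cast]; linarith
  have hu2 : U - 1 ≤ (u:ℝ) := by rw [hu_cast]; linarith
  have hu0 : (0:ℝ) < u := by rw [hu_cast]; positivity
  obtain ⟨k, hk_def⟩ : ∃ v : ℕ, v = ⌊y/(u:ℝ)⌋₊ := ⟨_, rfl⟩
  have hk1 : (k:ℝ) ≤ y/u := by rw [hk_def]; exact Nat.floor_le (by positivity)
  have hk2 : y/u < (k:ℝ)+1 := by rw [hk_def]; exact Nat.lt_floor_add_one _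
  have huk1 : (k:ℝ) * u ≤ y := (le_div_iff₀ hu0).mp hk1
  have huk2 : y < ((k:ℝ)+1) * u := (div_lt_iff₀ hu0).mp hk2
  have hkT : (k:ℝ) ≤ 2*T := by
    have h : y/u ≤ 2*T := by
      rw [div_le_iff₀ hu0]
      have w1 : T*(U-1) ≤ T*(u:ℝ) := mul_le_mul_of_nonneg_left hu2 hT0.le
      have w2 : T*100 ≤ T*U := mul_le_mul_of_nonneg_left hU100 hT0.le
      have w3 : T*(U-1) = T*U - T := by ring
      have w4 : 2*T*(u:ℝ) = 2*(T*(u:ℝ)) := by ring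
      linarith
    linarith
  have hpk : p + 1 ≤ k := by
    have h2 : U - 1 ≤ y/u := by
      rw [le_div_iff₀ hu0]
      have hUUy : U*U ≤ y := by
        have := mul_le_mul_of_nonneg_right hUT hU0.le
        linarith
      have w1 : (U-1)*(u:ℝ) ≤ (U-1)*(U+1) :=
        mul_le_mul_of_nonneg_left hu1 (by linarith : (0:ℝ) ≤ U - 1)
      have w2 : (U-1)*(U+1) = U*U - 1 := by ring
      linarith
    have h3 : ((p+1:ℕ):ℝ) ≤ y/(u:ℝ) := by
      rw [Nat.cast_add, Nat.cast_one]; linarith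
    rw [hk_def]
    exact Nat.le_floor h3
  have hk1' : 1 ≤ k := by omega
  obtain ⟨m, hm_def⟩ : ∃ v : ℕ, v = u*k+p := ⟨_, rfl⟩
  have hm_cast : (m:ℝ) = (u:ℝ)*(k:ℝ) + p := by rw [hm_def]; push_cast; ring
  have hpR0 : (0:ℝ) ≤ (p:ℝ) := Nat.cast_nonneg _
  have hmR1 : (m:ℝ) ≤ y + U/2 := by rw [hm_cast]; linarith [huk1, hp1]
  have hmR2 : y - U - 1 ≤ (m:ℝ) := by rw [hm_cast]; linarith [huk2, hu1, hpR0]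
  obtain ⟨a, ha_def⟩ : ∃ v : ℕ, v = k - p := ⟨_, rfl⟩
  obtain ⟨b, hb_def⟩ : ∃ v : ℕ, v = k + p + 1 := ⟨_, rfl⟩
  have ha_cast : (a:ℝ) = (k:ℝ) - p := by
    rw [ha_def, Nat.cast_sub (by omega : p ≤ k)]
  have hb_cast : (b:ℝ) = (k:ℝ) + p + 1 := by rw [hb_def]; push_cast; ring
  have haR0 : (0:ℝ) ≤ (a:ℝ) := Nat.cast_nonneg _
  have haR : (a:ℝ) ≤ 2*T := by
    have hpR : (0:ℝ) ≤ (p:ℝ) := Nat.cast_nonneg _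
    rw [ha_cast]; linarith
  have hbR : (b:ℝ) ≤ 3*T := by rw [hb_cast]; linarith
  -- nat inequalities
  have hukk : k + 1 ≤ u*k := by
    calc k + 1 ≤ 2*k := by omega
      _ ≤ u*k := Nat.mul_le_mul_right k (by omega)
  have hkm : k ≤ m := by
    rw [hm_def]
    exact le_trans (le_trans (Nat.le_succ k) hukk) (Nat.le_add_right _ p)
  have ham : a ≤ m := by
    have h : a ≤ k := by rw [ha_def]; omega
    exact le_trans h hkm
  have hbm : b ≤ m := by
    rw [hb_def, hm_def]
    calc k + p + 1 = (k + 1) + p := by ring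
      _ ≤ u*k + p := Nat.add_le_add_right hukk p
  -- the factorization identity
  have hrel : (b:ℤ)*(b:ℤ) = (a:ℤ)*(a:ℤ) + 2*(m:ℤ) + 1 := by
    have h1 : (a:ℤ) = (k:ℤ) - (p:ℤ) := by
      rw [ha_def]; omega
    have h2 : (b:ℤ) = (k:ℤ) + p + 1 := by rw [hb_def]; push_cast; ring
    have h3 : (m:ℤ) = (2*(p:ℤ)+1)*k + p := by rw [hm_def, hu_def]; push_cast; ring
    rw [h1, h2, h3]; ring
  have hkey : (m+1-b) * (m+1+b) = (m-a) * (m+a) := by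
    have h2 : b ≤ m + 1 := by omega
    have hcast : (((m+1-b) * (m+1+b) : ℕ) : ℤ) = (((m-a) * (m+a) : ℕ) : ℤ) := by
      push_cast [Nat.cast_sub h2, Nat.cast_sub ham]
      linear_combination -hrel
    exact_mod_cast hcast
  have hn_cast : (((m-a)*(m+a) : ℕ) : ℝ) = ((m:ℝ) - a) * ((m:ℝ) + a) := by
    push_cast [Nat.cast_sub ham]; ring
  have ha1_cast : (((m+1-b) : ℕ) : ℝ) = (m:ℝ) + 1 - b := by
    push_cast [Nat.cast_sub (by omega : b ≤ m + 1)]; ring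
  have hb1_cast : (((m+1+b) : ℕ) : ℝ) = (m:ℝ) + 1 + b := by push_cast; ring
  -- interval bounds for the extreme factors
  have hlow : y - 10*T ≤ (((m+1-b) : ℕ) : ℝ) := by
    rw [ha1_cast]; linarith
  have hhigh : (((m+1+b) : ℕ) : ℝ) ≤ y + 10*T := by
    rw [hb1_cast]; linarith
  -- order relations
  have h12 : m+1-b < m-a := by
    have hab : a + 2 ≤ b := by rw [ha_def, hb_def]; omega
    omega
  have h23 : m-a ≤ m+a := by omega
  have h34 : m+a < m+1+b := by
    have hab : a ≤ b := by rw [ha_def, hb_def]; omega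
    omega
  refine ⟨(m-a)*(m+a), m+1-b, m-a, m+1+b, m+a, by omega, h12, h23, h34, hkey.symm, rfl,
    ?_, ?_, ?_⟩
  · -- lower bound for n
    rw [hn_cast, show ((m:ℝ) - a)*((m:ℝ) + a) = (m:ℝ)*m - (a:ℝ)*a from by ring]
    have hyU1 : 0 ≤ y - U - 1 := by
      have := mul_le_mul_of_nonneg_right hT100 hU0.le
      linarith
    have h1 : (y - U - 1)*(y - U - 1) ≤ (m:ℝ)*(m:ℝ) := mul_self_le_mul_self hyU1 hmR2
    have h2 : (a:ℝ)*(a:ℝ) ≤ (2*T)*(2*T) := mul_self_le_mul_self haR0 haR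
    have q1 : (y - U - 1)*(y - U - 1) = y*y - 2*(y*U) - 2*y + (U+1)*(U+1) := by ring
    have q2 : (0:ℝ) ≤ (U+1)*(U+1) := by positivity
    have q3 : (2*T)*(2*T) = 4*(T*T) := by ring
    linarith [h1, h2, q1, q2, q3, hyy, hyU, hyX, hTX, hX0.le]
  · -- upper bound for n
    rw [hn_cast, show ((m:ℝ) - a)*((m:ℝ) + a) = (m:ℝ)*m - (a:ℝ)*a from by ring]
    have h3 : (m:ℝ)*(m:ℝ) ≤ (y+U/2)*(y+U/2) :=
      mul_self_le_mul_self (Nat.cast_nonneg m) hmR1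
    have hUU : U*U ≤ X := le_trans (mul_le_mul hUT hUT hU0.le hT0.le) hTX
    have q3 : (y+U/2)*(y+U/2) = y*y + y*U + (U*U)/4 := by ring
    have q4 : (0:ℝ) ≤ (a:ℝ)*(a:ℝ) := by positivity
    linarith [h3, hUU, q3, q4, hyy, hyU, hX0.le]
  · intro f hf
    have hup : ∀ g : ℕ, g ≤ m+1+b → ((g:ℕ):ℝ) ≤ y + 10*T := fun g hg =>
      le_trans (Nat.cast_le.mpr hg) hhigh
    have hdn : ∀ g : ℕ, m+1-b ≤ g → y - 10*T ≤ ((g:ℕ):ℝ) := fun g hg =>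
      le_trans hlow (Nat.cast_le.mpr hg)
    simp only [List.mem_cons, List.mem_singleton, List.not_mem_nil, or_false] at hf
    rcases hf with rfl | rfl | rfl | rfl
    · exact ⟨hdn _ le_rfl, hup _ (by omega)⟩
    · exact ⟨hdn _ (by omega), hup _ (by omega)⟩
    · exact ⟨hdn _ (by omega), hup _ (by omega)⟩
    · exact ⟨hdn _ (by omega), hup _ le_rfl⟩
end
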